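/- arXiv:2006.09877 — 2 statements merged into one kernel-verified Lean document; each statement's English description precedes it below -/
import Mathlib

section
/- Let t ≥ 1 and let G and H be finite simple graphs. If G is K_{t,t}-free, then the strong product G ⊠ H is K_{s,s}-free, where s = 2t(Δ(H)+1) and Δ(H) is the maximum degree of H. -/
/-- The strong product of two simple graphs. -/
def strongProd {V W : Type*} (G : SimpleGraph V) (H : SimpleGraph W) : SimpleGraph (V × W) where
  Adj a b := a ≠ b ∧ (a.1 = b.1 ∨ G.Adj a.1 b.1) ∧ (a.2 = b.2 ∨ H.Adj a.2 b.2)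
  symm := ⟨by
    rintro a b ⟨hne, h1, h2⟩
    exact ⟨hne.symm, h1.imp Eq.symm (fun h => h.symm), h2.imp Eq.symm (fun h => h.symm)⟩⟩
  loopless := ⟨fun a h => h.1 rfl⟩

/-- The maximum degree of a finite simple graph. -/
noncomputable def maxDeg {W : Type*} [Fintype W] (H : SimpleGraph W) : ℕ :=
  Finset.univ.sup fun v => {u | H.Adj v u}.ncard

/-- `G` is `K_{t,t}`-free: it contains no complete bipartite subgraph `K_{t,t}`. -/
def KttFree {V : Type*} (G : SimpleGraph V) (t : ℕ) : Prop :=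
  ¬ ∃ (A B : Finset V), Disjoint A B ∧ A.card = t ∧ B.card = t ∧
      ∀ a ∈ A, ∀ b ∈ B, G.Adj a b

/-!
Project a copy `A, B` of `K_{s,s}` in `G ⊠ H` to `V`. All of `A` is adjacent to one vertex
`(v, w)` of `B`, so the second coordinates of `A` lie in the closed neighbourhood of `w`, which
has at most `Δ(H) + 1` elements; hence `A` projects onto at least `s / (Δ(H) + 1) = 2t` vertices,
and likewise `B`. Two projected vertices are equal or adjacent in `G`, so choosing `t` vertices
from the projection of `B` and `t` others from that of `A` gives a `K_{t,t}` in `G`.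
-/

open Finset

theorem pos_of_kttFree {V : Type*} {G : SimpleGraph V} {t : ℕ} (hG : KttFree G t) : 0 < t :=
  Nat.pos_of_ne_zero <| by
    rintro rfl
    exact hG ⟨∅, ∅, disjoint_empty_left _, rfl, rfl, by simp⟩

theorem not_kttFree_of_forall_eq_or_adj {V : Type*} [DecidableEq V] {G : SimpleGraph V}
    {t : ℕ} {X Y : Finset V} (hX : 2 * t ≤ #X) (hY : t ≤ #Y)
    (hXY : ∀ x ∈ X, ∀ y ∈ Y, x = y ∨ G.Adj x y) : ¬ KttFree G t := by
  obtain ⟨B, hBY, hB⟩ := exists_subset_card_eq hY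
  have hXB : t ≤ #(X \ B) := by
    have := le_card_sdiff B X
    omega
  obtain ⟨A, hAX, hA⟩ := exists_subset_card_eq hXB
  refine not_not_intro ⟨A, B, disjoint_of_subset_left hAX sdiff_disjoint, hA, hB, ?_⟩
  intro a ha b hb
  have ha' := mem_sdiff.1 (hAX ha)
  exact (hXY a ha'.1 b (hBY hb)).resolve_left fun hab => ha'.2 (hab ▸ hb)

theorem ncard_adj_le_maxDeg {W : Type*} [Fintype W] (H : SimpleGraph W) (w : W) :
    {u | H.Adj w u}.ncard ≤ maxDeg H :=
  le_sup (f := fun v => {u | H.Adj v u}.ncard) (mem_univ w)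

theorem card_le_card_image_fst_mul_card {V W : Type*} [DecidableEq V] {S : Finset (V × W)}
    {N : Finset W} (hSN : ∀ p ∈ S, p.2 ∈ N) : #S ≤ #(S.image Prod.fst) * #N := by
  calc #S ≤ #(S.image Prod.fst ×ˢ N) :=
        card_le_card fun p hp => mem_product.2 ⟨mem_image_of_mem _ hp, hSN p hp⟩
    _ = #(S.image Prod.fst) * #N := card_product _ _

theorem card_le_card_image_fst_mul_of_forall_strongProd_adj {V W : Type*} [Fintype W]
    [DecidableEq V] {G : SimpleGraph V} {H : SimpleGraph W} {S : Finset (V × W)} {q : V × W}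
    (hS : ∀ p ∈ S, (strongProd G H).Adj p q) :
    #S ≤ #(S.image Prod.fst) * (maxDeg H + 1) := by
  classical
  let N : Finset W := insert q.2 (Set.toFinite {u | H.Adj q.2 u}).toFinset
  have hSN : ∀ p ∈ S, p.2 ∈ N := fun p hp => by
    rcases (hS p hp).2.2 with h | h
    · exact mem_insert.2 (Or.inl h)
    · exact mem_insert_of_mem ((Set.Finite.mem_toFinset _).2 h.symm)
  have hN : #N ≤ maxDeg H + 1 := by
    refine (card_insert_le _ _).trans (Nat.succ_le_succ ?_)
    rw [← Set.ncard_eq_toFinset_card]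
    exact ncard_adj_le_maxDeg H q.2
  exact (card_le_card_image_fst_mul_card hSN).trans (Nat.mul_le_mul_left _ hN)

theorem strong_product_biclique_free_general {V W : Type*} [Fintype W] (t : ℕ)
    (G : SimpleGraph V) (H : SimpleGraph W) (hG : KttFree G t) :
    KttFree (strongProd G H) (2 * t * (maxDeg H + 1)) := by
  classical
  rintro ⟨A, B, -, hA, hB, hAB⟩
  have ht := pos_of_kttFree hG
  obtain ⟨p, hp⟩ : A.Nonempty := card_pos.1 (by rw [hA]; positivity)
  obtain ⟨q, hq⟩ : B.Nonempty := card_pos.1 (by rw [hB]; positivity)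
  have hX : 2 * t ≤ #(A.image Prod.fst) := Nat.le_of_mul_le_mul_right
    (hA ▸ card_le_card_image_fst_mul_of_forall_strongProd_adj fun a ha => hAB a ha q hq)
    (Nat.succ_pos _)
  have hY : 2 * t ≤ #(B.image Prod.fst) := Nat.le_of_mul_le_mul_right
    (hB ▸ card_le_card_image_fst_mul_of_forall_strongProd_adj fun b hb => (hAB p hp b hb).symm)
    (Nat.succ_pos _)
  refine not_kttFree_of_forall_eq_or_adj hX (Y := B.image Prod.fst) (by omega) ?_ hG
  intro x hx y hy
  obtain ⟨a, ha, rfl⟩ := mem_image.1 hx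
  obtain ⟨b, hb, rfl⟩ := mem_image.1 hy
  exact (hAB a ha b hb).2.1

/-- if `G` is `K_{t,t}`-free then `G ⊠ H` is `K_{s,s}`-free for
`s = 2t(Δ(H)+1)`. -/
theorem strong_product_biclique_free {V W : Type*} [Fintype W] (t : ℕ) (ht : 1 ≤ t)
    (G : SimpleGraph V) (H : SimpleGraph W) (hG : KttFree G t) :
    KttFree (strongProd G H) (2 * t * (maxDeg H + 1)) :=
  strong_product_biclique_free_general t G H hG
end

section
/- There is a function f : ℕ⁴ → ℕ such that the following holds: if G and H are finite simple graphs with tww(G) ≤ a, tww(H) ≤ b, Δ(H) ≤ D, and the strong product G ⊠ H is K_{t,t}-free, then every subgraph of G ⊠ H has twin-width at most f(a, b, D, t). -/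
/-- A trigraph: a finite vertex set with disjoint black and red edge sets. -/
structure Trigraph (V : Type*) where
  verts : Finset V
  black : V → V → Prop
  red : V → V → Prop
  black_symm : ∀ u v, black u v → black v u
  red_symm : ∀ u v, red u v → red v u
  black_irrefl : ∀ u, ¬ black u u
  red_irrefl : ∀ u, ¬ red u u
  black_red_disjoint : ∀ u v, black u v → ¬ red u v
  black_mem : ∀ u v, black u v → u ∈ verts ∧ v ∈ verts
  red_mem : ∀ u v, red u v → u ∈ verts ∧ v ∈ verts

namespace Trigraph

variable {V : Type*} [DecidableEq V]

/-- The red degree of a vertex. -/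
noncomputable def redDeg (G : Trigraph V) (x : V) : ℕ := {y | G.red x y}.ncard

/-- `G` is a `d`-trigraph: every vertex is incident to at most `d` red edges. -/
def RedDegLE (G : Trigraph V) (d : ℕ) : Prop := ∀ x, G.redDeg x ≤ d

/-- `G'` is obtained from `G` by contracting the two distinct vertices `u` and `v`
(the contracted vertex is represented by `u`, and `v` is deleted). -/
def IsContractionAt (G G' : Trigraph V) (u v : V) : Prop :=
  u ∈ G.verts ∧ v ∈ G.verts ∧ u ≠ v ∧
  G'.verts = G.verts.erase v ∧
  (∀ x y, x ≠ u → y ≠ u → (G'.black x y ↔ (G.black x y ∧ x ≠ v ∧ y ≠ v))) ∧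
  (∀ x y, x ≠ u → y ≠ u → (G'.red x y ↔ (G.red x y ∧ x ≠ v ∧ y ≠ v))) ∧
  (∀ x, x ≠ u → x ≠ v → (G'.black u x ↔ (G.black u x ∧ G.black v x))) ∧
  (∀ x, x ≠ u → x ≠ v →
    (G'.red u x ↔
      ((G.black u x ∨ G.red u x ∨ G.black v x ∨ G.red v x) ∧ ¬ (G.black u x ∧ G.black v x))))

/-- `G'` is obtained from `G` by contracting some pair of vertices. -/
def IsContraction (G G' : Trigraph V) : Prop := ∃ u v, IsContractionAt G G' u v

/-- `G` admits a `d`-sequence: a sequence `G = G_n, …, G_1` of `d`-trigraphs, each obtained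
from the previous one by a contraction, ending in a one-vertex trigraph. -/
def HasSeq (G : Trigraph V) (d : ℕ) : Prop :=
  ∃ f : ℕ → Trigraph V,
    f G.verts.card = G ∧
    (∀ i, 1 ≤ i → i < G.verts.card → IsContraction (f (i + 1)) (f i)) ∧
    (∀ i, 1 ≤ i → i ≤ G.verts.card → (f i).RedDegLE d)

/-- The twin-width of a trigraph: the least `d` such that it admits a `d`-sequence. -/
noncomputable def tww (G : Trigraph V) : ℕ := sInf {d | G.HasSeq d}

end Trigraph

/-- The trigraph induced by a simple graph `G` on the vertex set `s`: all edges black. -/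
def SimpleGraph.toTrigraphOn {V : Type*} (G : SimpleGraph V) (s : Finset V) : Trigraph V where
  verts := s
  black u v := G.Adj u v ∧ u ∈ s ∧ v ∈ s
  red _ _ := False
  black_symm := fun _ _ ⟨h, hu, hv⟩ => ⟨h.symm, hv, hu⟩
  red_symm := fun _ _ h => h.elim
  black_irrefl := fun u h => G.loopless.irrefl u h.1
  red_irrefl := fun _ h => h
  black_red_disjoint := fun _ _ _ h => h
  black_mem := fun _ _ ⟨_, hu, hv⟩ => ⟨hu, hv⟩
  red_mem := fun _ _ h => h.elim

/-- The trigraph associated to a finite simple graph: all edges black. -/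
def SimpleGraph.toTrigraph {V : Type*} [Fintype V] (G : SimpleGraph V) : Trigraph V :=
  G.toTrigraphOn Finset.univ

/-!
A `d`-sequence of `Γ[s]` amounts to a sequence of partitions of `s`, each obtained from the
previous one by merging two parts, whose quotients (parts as vertices; complete pairs of parts
black, mixed pairs red) have red degree at most `d`. Conversely a coarse chain of partitions from
the discrete one to a single part, in which each part is the union of at most `M` parts of the
previous partition and every quotient has red degree at most `d`, can be completed by merging the
parts pairwise in between; the intermediate quotients then have red degree at most `M (d + 1)`.

For `G ⊠ H`, first contract `G` coordinatewise (keeping `H` discrete), then `H` (with `G` a single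
part): the quotients have red degree at most `(a + 1)(D + 1)`, resp. `b + D`. For a subgraph `Γ` of
the `K_{t,t}`-free graph `K = G ⊠ H`, refine every partition of this chain: a part with fewer than
`t` vertices is split into singletons, and a larger part `X` according to the `Γ`-neighbourhoods
in the set of vertices in small parts `K`-complete to `X`, a set with fewer than `t` vertices
since `K` is `K_{t,t}`-free. Every part is cut into at most `2 ^ t` pieces, and pieces of two
distinct `K`-complete parts are never mixed in `Γ` (two large ones would contain a `K_{t,t}`), so
the refined chain has red degrees at most `2 ^ t (c + 1)` if those of the chain of `K` are at most
`c`.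
-/

open Finset

/-! ### Trigraphs -/

namespace Trigraph

variable {V : Type*} {T T' : Trigraph V} {d : ℕ}

theorem ext (hv : T.verts = T'.verts) (hb : T.black = T'.black) (hr : T.red = T'.red) :
    T = T' := by
  cases T; cases T'; cases hv; cases hb; cases hr; rfl

open scoped Classical in
theorem card_filter_red_eq_redDeg (T : Trigraph V) (x : V) :
    #{y ∈ T.verts | T.red x y} = T.redDeg x := by
  rw [redDeg, ← Set.ncard_coe_finset]
  congr 1
  ext y
  simpa using fun h => (T.red_mem x y h).2

theorem redDeg_le_of_red_subset {x : V} {s : Finset V} (hs : ∀ y, T.red x y → y ∈ s)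
    (hd : #s ≤ d) : T.redDeg x ≤ d :=
  calc T.redDeg x ≤ (s : Set V).ncard := Set.ncard_le_ncard hs s.finite_toSet
    _ = #s := Set.ncard_coe_finset s
    _ ≤ d := hd

theorem RedDegLE.mono {d' : ℕ} (h : T.RedDegLE d) (hd : d ≤ d') : T.RedDegLE d' :=
  fun x => (h x).trans hd

theorem redDegLE_of_card_verts_le_one (h : #T.verts ≤ 1) (d : ℕ) : T.RedDegLE d := fun x =>
  redDeg_le_of_red_subset (s := ∅) (fun y hxy => absurd
    (card_le_one.1 h x (T.red_mem x y hxy).1 y (T.red_mem x y hxy).2 ▸ hxy) (T.red_irrefl x))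
    (Nat.zero_le d)

variable [DecidableEq V]

theorem HasSeq.mono {d' : ℕ} (h : T.HasSeq d) (hd : d ≤ d') : T.HasSeq d' :=
  let ⟨f, hf, hc, hr⟩ := h
  ⟨f, hf, hc, fun i h1 h2 => (hr i h1 h2).mono hd⟩

theorem hasSeq_of_tww_le (h : T.tww ≤ d) (hT : ∃ e, T.HasSeq e) : T.HasSeq d :=
  HasSeq.mono (show T.HasSeq T.tww from Nat.sInf_mem hT) h

theorem hasSeq_of_card_verts_le_one (h : #T.verts ≤ 1) (d : ℕ) : T.HasSeq d :=
  ⟨fun _ => T, rfl, fun _ _ _ => by omega, fun _ _ _ => redDegLE_of_card_verts_le_one h d⟩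

theorem IsContractionAt.card_verts {u v : V} (h : T.IsContractionAt T' u v) :
    #T'.verts + 1 = #T.verts := by
  rw [h.2.2.2.1, card_erase_add_one h.2.1]

theorem HasSeq.of_isContraction (h : T'.HasSeq d) (hc : T.IsContraction T')
    (hT : T.RedDegLE d) : T.HasSeq d := by
  obtain ⟨u, v, huv⟩ := hc
  obtain ⟨f, hf, hfc, hfd⟩ := h
  have hn := huv.card_verts
  refine ⟨Function.update f #T.verts T, by simp, fun i h1 h2 => ?_, fun i h1 h2 => ?_⟩
  · rcases eq_or_ne (i + 1) #T.verts with hi | hi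
    · rw [hi, Function.update_self, Function.update_of_ne (by omega),
        show i = #T'.verts by omega, hf]
      exact ⟨u, v, huv⟩
    · rw [Function.update_of_ne hi, Function.update_of_ne (by omega)]
      exact hfc i h1 (by omega)
  · rcases eq_or_ne i #T.verts with hi | hi
    · rw [hi, Function.update_self]; exact hT
    · rw [Function.update_of_ne hi]; exact hfd i h1 (by omega)

end Trigraph

/-! ### Graphs -/

namespace SimpleGraph

variable {α : Type*} {Γ : SimpleGraph α} {s t u v : Set α}

theorem IsCompleteBetween.mono (h : Γ.IsCompleteBetween s t) (hs : u ⊆ s) (ht : v ⊆ t) :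
    Γ.IsCompleteBetween u v :=
  fun _ hx _ hy => h (hs hx) (ht hy)

theorem isCompleteBetween_union_left :
    Γ.IsCompleteBetween (s ∪ t) u ↔ Γ.IsCompleteBetween s u ∧ Γ.IsCompleteBetween t u :=
  ⟨fun h => ⟨h.mono Set.subset_union_left subset_rfl, h.mono Set.subset_union_right subset_rfl⟩,
    fun h _ hx _ hy => hx.elim (fun hx => h.1 hx hy) (fun hx => h.2 hx hy)⟩

end SimpleGraph

theorem KttFree.not_isCompleteBetween {V : Type*} {K : SimpleGraph V} {t : ℕ} (h : KttFree K t)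
    {A B : Finset V} (hAB : Disjoint A B) (hA : t ≤ #A) (hB : t ≤ #B) :
    ¬ K.IsCompleteBetween A B := fun hc => by
  obtain ⟨A', hA', hA'c⟩ := exists_subset_card_eq hA
  obtain ⟨B', hB', hB'c⟩ := exists_subset_card_eq hB
  exact h ⟨A', B', disjoint_of_subset_left hA' (disjoint_of_subset_right hB' hAB), hA'c, hB'c,
    fun a ha b hb => hc (hA' ha) (hB' hb)⟩

theorem card_filter_adj_le_maxDeg {W : Type*} [Fintype W] (H : SimpleGraph W)
    [DecidableRel H.Adj] (t : Finset W) (w : W) : #{u ∈ t | H.Adj w u} ≤ maxDeg H :=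
  calc #{u ∈ t | H.Adj w u} ≤ #{u | H.Adj w u} :=
        card_le_card (filter_subset_filter _ (subset_univ t))
    _ = {u | H.Adj w u}.ncard := by rw [← Set.ncard_coe_finset, coe_filter_univ]
    _ ≤ maxDeg H := le_sup (f := fun v => {u | H.Adj v u}.ncard) (mem_univ w)

theorem strongProd_adj {V W : Type*} {G : SimpleGraph V} {H : SimpleGraph W} {x y : V × W} :
    (strongProd G H).Adj x y ↔
      x ≠ y ∧ (x.1 = y.1 ∨ G.Adj x.1 y.1) ∧ (x.2 = y.2 ∨ H.Adj x.2 y.2) :=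
  Iff.rfl

namespace TwinWidth

section Graph

variable {α : Type*} {Γ K : SimpleGraph α} {A B A' B' : Finset α}

def HasEdgeBetween (Γ : SimpleGraph α) (A B : Finset α) : Prop :=
  ∃ x ∈ A, ∃ y ∈ B, Γ.Adj x y

def IsMixed (Γ : SimpleGraph α) (A B : Finset α) : Prop :=
  HasEdgeBetween Γ A B ∧ ¬ Γ.IsCompleteBetween A B

theorem HasEdgeBetween.symm (h : HasEdgeBetween Γ A B) : HasEdgeBetween Γ B A :=
  let ⟨x, hx, y, hy, hxy⟩ := h
  ⟨y, hy, x, hx, hxy.symm⟩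

theorem HasEdgeBetween.mono (h : HasEdgeBetween Γ A B) (hA : A ⊆ A') (hB : B ⊆ B') :
    HasEdgeBetween Γ A' B' :=
  let ⟨x, hx, y, hy, hxy⟩ := h
  ⟨x, hA hx, y, hB hy, hxy⟩

theorem HasEdgeBetween.of_le (h : HasEdgeBetween Γ A B) (hΓ : Γ ≤ K) : HasEdgeBetween K A B :=
  let ⟨x, hx, y, hy, hxy⟩ := h
  ⟨x, hx, y, hy, hΓ hxy⟩

theorem hasEdgeBetween_union_left [DecidableEq α] {C : Finset α} :
    HasEdgeBetween Γ (A ∪ C) B ↔ HasEdgeBetween Γ A B ∨ HasEdgeBetween Γ C B := by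
  simp only [HasEdgeBetween, mem_union, or_and_right, exists_or]

theorem HasEdgeBetween.of_isCompleteBetween (h : Γ.IsCompleteBetween A B) (hA : A.Nonempty)
    (hB : B.Nonempty) : HasEdgeBetween Γ A B :=
  ⟨_, hA.choose_spec, _, hB.choose_spec, h hA.choose_spec hB.choose_spec⟩

theorem IsMixed.symm (h : IsMixed Γ A B) : IsMixed Γ B A :=
  ⟨h.1.symm, fun hc => h.2 hc.symm⟩

theorem IsMixed.mono (h : IsMixed Γ A B) (hA : A ⊆ A') (hB : B ⊆ B') : IsMixed Γ A' B' :=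
  ⟨h.1.mono hA hB, fun hc => h.2 (hc.mono (coe_subset.2 hA) (coe_subset.2 hB))⟩

theorem not_isMixed_singleton_left {a : α}
    (hB : ∀ x ∈ B, ∀ y ∈ B, Γ.Adj a x → Γ.Adj a y) : ¬ IsMixed Γ {a} B := by
  rintro ⟨⟨a', ha', x, hx, hax⟩, hc⟩
  rw [mem_singleton] at ha'
  subst ha'
  exact hc fun a'' ha'' y hy => (mem_singleton.1 ha'') ▸ hB x hx y hy hax

theorem not_isMixed_singleton (a b : α) : ¬ IsMixed Γ {a} {b} :=
  not_isMixed_singleton_left fun _ hx _ hy h => (mem_singleton.1 hx ▸ mem_singleton.1 hy) ▸ h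

end Graph

/-! ### Partitions given by representative maps -/

section Partition

variable {α : Type*} {s : Finset α} {r r' r'' : α → α} {p q x y : α}

/-- A representative map of a partition of `s`: the parts are the fibres of `r` over its fixed
points in `s`. -/
structure IsRepMap (s : Finset α) (r : α → α) : Prop where
  mapsTo : ∀ x ∈ s, r x ∈ s
  idem : ∀ x, r (r x) = r x

theorem isRepMap_id (s : Finset α) : IsRepMap s id := ⟨fun _ hx => hx, fun _ => rfl⟩

def Refines (s : Finset α) (r r' : α → α) : Prop :=
  ∀ x ∈ s, ∀ y ∈ s, r x = r y → r' x = r' y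

theorem Refines.refl (s : Finset α) (r : α → α) : Refines s r r := fun _ _ _ _ h => h

theorem Refines.trans (h : Refines s r r') (h' : Refines s r' r'') : Refines s r r'' :=
  fun x hx y hy hxy => h' x hx y hy (h x hx y hy hxy)

theorem Refines.apply_self (h : Refines s r r') (hr : IsRepMap s r) (hx : x ∈ s) :
    r' (r x) = r' x :=
  h _ (hr.mapsTo x hx) x hx (hr.idem x)

variable [DecidableEq α]

def reps (s : Finset α) (r : α → α) : Finset α := {x ∈ s | r x = x}

def part (s : Finset α) (r : α → α) (p : α) : Finset α := {x ∈ s | r x = p}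

@[simp] theorem mem_reps : x ∈ reps s r ↔ x ∈ s ∧ r x = x := mem_filter

@[simp] theorem mem_part : x ∈ part s r p ↔ x ∈ s ∧ r x = p := mem_filter

theorem IsRepMap.apply_mem_reps (hr : IsRepMap s r) (hx : x ∈ s) : r x ∈ reps s r :=
  mem_reps.2 ⟨hr.mapsTo x hx, hr.idem x⟩

theorem self_mem_part (hp : p ∈ reps s r) : p ∈ part s r p := by
  simpa using hp

theorem reps_id (s : Finset α) : reps s id = s := filter_true_of_mem fun _ _ => rfl

theorem part_id (hp : p ∈ s) : part s id p = {p} := by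
  ext x
  simp only [mem_part, id_eq, mem_singleton]
  exact ⟨And.right, fun h => ⟨h ▸ hp, h⟩⟩

theorem part_subset_part_of_refines (h : Refines s r r') (hp : p ∈ reps s r) :
    part s r p ⊆ part s r' (r' p) := fun x hx => by
  rw [mem_part] at hx ⊢
  exact ⟨hx.1, h x hx.1 p (mem_reps.1 hp).1 (hx.2.trans (mem_reps.1 hp).2.symm)⟩

def subparts (s : Finset α) (r r' : α → α) (p : α) : Finset α := {w ∈ reps s r | r' w = r' p}

theorem mem_subparts {w : α} : w ∈ subparts s r r' p ↔ w ∈ reps s r ∧ r' w = r' p := mem_filter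

theorem card_subparts_le_of_refines {rf : α → α} (hf : IsRepMap s rf) (h : Refines s rf r)
    (h' : Refines s r r') : #(subparts s r r' p) ≤ #(subparts s rf r' p) := by
  refine card_le_card_of_surjOn r fun w hw => ?_
  obtain ⟨hw, hwp⟩ := mem_subparts.1 hw
  obtain ⟨hws, hrw⟩ := mem_reps.1 hw
  exact ⟨rf w, mem_subparts.2 ⟨hf.apply_mem_reps hws, ((h.trans h').apply_self hf hws).trans hwp⟩,
    by rw [h.apply_self hf hws, hrw]⟩

theorem card_subparts_self_le_one (x : α) : #(subparts s r r x) ≤ 1 :=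
  card_le_one.2 fun a ha b hb => by
    simp only [mem_subparts, mem_reps] at ha hb
    rw [← ha.1.2, ← hb.1.2, ha.2, hb.2]

def merge (r : α → α) (p q : α) : α → α := fun x => if r x = q then p else r x

theorem merge_apply : merge r p q x = if r x = q then p else r x := rfl

theorem IsRepMap.merge (hr : IsRepMap s r) (hp : p ∈ reps s r) (hpq : p ≠ q) :
    IsRepMap s (merge r p q) where
  mapsTo x hx := by
    rw [merge_apply]
    split_ifs
    exacts [(mem_reps.1 hp).1, hr.mapsTo x hx]
  idem x := by
    have hrp := (mem_reps.1 hp).2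
    by_cases hx : r x = q <;> simp [merge_apply, hx, hrp, hpq, hr.idem]

theorem merge_eq_self_iff (hp : p ∈ reps s r) (hpq : p ≠ q) :
    merge r p q x = x ↔ r x = x ∧ x ≠ q := by
  have hrp := (mem_reps.1 hp).2
  by_cases hx : r x = q
  · simp only [merge_apply, hx, if_true]
    constructor
    · intro h; exact absurd (by rw [← hx, ← h, hrp]) hpq
    · rintro ⟨h, h'⟩; exact absurd h.symm h'
  · simp only [merge_apply, hx, if_false]
    exact ⟨fun h => ⟨h, fun h' => hx (h' ▸ h)⟩, And.left⟩

theorem reps_merge (hp : p ∈ reps s r) (hpq : p ≠ q) :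
    reps s (merge r p q) = (reps s r).erase q := by
  ext x
  simp only [mem_reps, mem_erase, merge_eq_self_iff hp hpq]
  tauto

theorem mem_reps_of_mem_reps_merge (hp : p ∈ reps s r) (hpq : p ≠ q)
    (hx : x ∈ reps s (merge r p q)) : x ∈ reps s r ∧ x ≠ q :=
  (mem_erase.1 (reps_merge hp hpq ▸ hx)).symm

theorem part_merge_of_ne (hxp : x ≠ p) (hxq : x ≠ q) :
    part s (merge r p q) x = part s r x := by
  ext y
  simp only [mem_part, merge_apply, and_congr_right_iff]
  intro _
  split_ifs with hy
  · exact ⟨fun h => absurd h.symm hxp, fun h => absurd (h.symm.trans hy) hxq⟩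
  · rfl

theorem part_merge_self : part s (merge r p q) p = part s r p ∪ part s r q := by
  ext y
  simp only [mem_part, merge_apply, mem_union]
  split_ifs with hy <;> simp only [hy, and_true] <;> tauto

theorem refines_merge (s : Finset α) (r : α → α) (p q : α) : Refines s r (merge r p q) :=
  fun _ _ _ _ h => by simp only [merge_apply, h]

theorem Refines.merge_of_apply_eq (h : Refines s r r') (hr : IsRepMap s r) (hpq : r' p = r' q) :
    Refines s (merge r p q) r' := by
  have key : ∀ w ∈ s, r' w = r' (merge r p q w) := fun w hw => by
    rw [← h.apply_self hr hw, merge_apply]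
    split_ifs with hw'
    exacts [hw' ▸ hpq.symm, rfl]
  intro x hx y hy hxy
  rw [key x hx, key y hy, hxy]

theorem card_subparts_merge_le_two : #(subparts s r (merge r p q) x) ≤ 2 := by
  refine (card_le_card fun w hw => ?_).trans (card_le_two (a := merge r p q x) (b := q))
  obtain ⟨hw, hwx⟩ := mem_subparts.1 hw
  rw [mem_insert, mem_singleton, ← hwx, merge_apply, (mem_reps.1 hw).2]
  split_ifs with h <;> tauto

section Labelling

variable {ι : Type*} {δ δ' : α → ι}

/-- The representative map of the partition of `s` into level sets of the labelling `δ`. -/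
noncomputable def repOf (s : Finset α) (δ : α → ι) (x : α) : α :=
  if x ∈ s then @Classical.epsilon α (Nonempty.intro x) fun y => y ∈ s ∧ δ y = δ x else x

theorem repOf_spec (hx : x ∈ s) : repOf s δ x ∈ s ∧ δ (repOf s δ x) = δ x := by
  rw [repOf, if_pos hx]
  exact Classical.epsilon_spec (p := fun y => y ∈ s ∧ δ y = δ x) ⟨x, hx, rfl⟩

theorem repOf_eq_repOf_iff (hx : x ∈ s) (hy : y ∈ s) :
    repOf s δ x = repOf s δ y ↔ δ x = δ y := by
  refine ⟨fun h => ?_, fun h => by simp only [repOf, if_pos hx, if_pos hy, h]⟩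
  rw [← (repOf_spec (δ := δ) hx).2, h, (repOf_spec (δ := δ) hy).2]

theorem isRepMap_repOf (s : Finset α) (δ : α → ι) : IsRepMap s (repOf s δ) where
  mapsTo _ hx := (repOf_spec hx).1
  idem x := by
    by_cases hx : x ∈ s
    · exact (repOf_eq_repOf_iff (repOf_spec hx).1 hx).2 (repOf_spec hx).2
    · simp only [repOf, if_neg hx]

theorem repOf_eq_id (hδ : Set.InjOn δ s) : repOf s δ = id := by
  funext x
  by_cases hx : x ∈ s
  · exact hδ (repOf_spec hx).1 hx (repOf_spec hx).2
  · simp only [repOf, if_neg hx, id_eq]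

theorem refines_repOf (h : ∀ x ∈ s, ∀ y ∈ s, δ x = δ y → δ' x = δ' y) :
    Refines s (repOf s δ) (repOf s δ') := fun x hx y hy hxy =>
  (repOf_eq_repOf_iff hx hy).2 (h x hx y hy ((repOf_eq_repOf_iff hx hy).1 hxy))

theorem mem_part_repOf (hx : x ∈ s) :
    y ∈ part s (repOf s δ) (repOf s δ x) ↔ y ∈ s ∧ δ y = δ x := by
  rw [mem_part]
  exact ⟨fun h => ⟨h.1, (repOf_eq_repOf_iff h.1 hx).1 h.2⟩,
    fun h => ⟨h.1, (repOf_eq_repOf_iff h.1 hx).2 h.2⟩⟩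

end Labelling

end Partition

section Product

variable {α β : Type*} {s : Finset α} {t : Finset β} {r r' : α → α} {g g' : β → β}

theorem IsRepMap.prodMap (hr : IsRepMap s r) (hg : IsRepMap t g) :
    IsRepMap (s ×ˢ t) (Prod.map r g) where
  mapsTo _ hx := mem_product.2 ⟨hr.mapsTo _ (mem_product.1 hx).1, hg.mapsTo _ (mem_product.1 hx).2⟩
  idem x := Prod.ext (hr.idem x.1) (hg.idem x.2)

theorem Refines.prodMap (hr : Refines s r r') (hg : Refines t g g') :
    Refines (s ×ˢ t) (Prod.map r g) (Prod.map r' g') := fun x hx y hy hxy => by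
  rw [mem_product] at hx hy
  exact Prod.ext (hr _ hx.1 _ hy.1 (congrArg Prod.fst hxy))
    (hg _ hx.2 _ hy.2 (congrArg Prod.snd hxy))

variable [DecidableEq α] [DecidableEq β]

theorem reps_prodMap : reps (s ×ˢ t) (Prod.map r g) = reps s r ×ˢ reps t g := by
  ext x
  simp [Prod.ext_iff, and_and_and_comm]

theorem part_prodMap (p : α × β) :
    part (s ×ˢ t) (Prod.map r g) p = part s r p.1 ×ˢ part t g p.2 := by
  ext x
  simp [Prod.ext_iff, and_and_and_comm]

theorem subparts_prodMap (p : α × β) :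
    subparts (s ×ˢ t) (Prod.map r g) (Prod.map r' g') p =
      subparts s r r' p.1 ×ˢ subparts t g g' p.2 := by
  ext x
  simp [subparts, reps_prodMap, Prod.ext_iff, and_and_and_comm]

end Product

/-! ### Quotient trigraphs -/

section Quotient

variable {α : Type*} [DecidableEq α] {s : Finset α} {r : α → α} {p q x y : α}
  {Γ : SimpleGraph α} {d : ℕ}

def PartRel (s : Finset α) (r : α → α) (Φ : Finset α → Finset α → Prop) (p q : α) : Prop :=
  p ≠ q ∧ p ∈ reps s r ∧ q ∈ reps s r ∧ Φ (part s r p) (part s r q)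

theorem PartRel.symm {Φ : Finset α → Finset α → Prop} (hΦ : ∀ A B, Φ A B → Φ B A)
    (h : PartRel s r Φ p q) : PartRel s r Φ q p :=
  ⟨h.1.symm, h.2.2.1, h.2.1, hΦ _ _ h.2.2.2⟩

/-- The trigraph obtained from `Γ[s]` by contracting every part of `r` into its representative. -/
def quotient (Γ : SimpleGraph α) (s : Finset α) (r : α → α) : Trigraph α where
  verts := reps s r
  black := PartRel s r fun A B => Γ.IsCompleteBetween A B
  red := PartRel s r (IsMixed Γ)
  black_symm _ _ := PartRel.symm fun _ _ h => h.symm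
  red_symm _ _ := PartRel.symm fun _ _ h => h.symm
  black_irrefl _ h := h.1 rfl
  red_irrefl _ h := h.1 rfl
  black_red_disjoint _ _ hb hr := hr.2.2.2.2 hb.2.2.2
  black_mem _ _ h := ⟨h.2.1, h.2.2.1⟩
  red_mem _ _ h := ⟨h.2.1, h.2.2.1⟩

theorem quotient_black :
    (quotient Γ s r).black = PartRel s r fun A B => Γ.IsCompleteBetween A B :=
  rfl

theorem quotient_red : (quotient Γ s r).red = PartRel s r (IsMixed Γ) := rfl

theorem mem_reps_of_red (h : (quotient Γ s r).red p q) : p ∈ reps s r ∧ q ∈ reps s r :=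
  (quotient Γ s r).red_mem p q h

theorem quotient_id (Γ : SimpleGraph α) (s : Finset α) : quotient Γ s id = Γ.toTrigraphOn s := by
  refine Trigraph.ext (reps_id s) ?_ ?_ <;> ext x y
  · simp only [quotient, SimpleGraph.toTrigraphOn, PartRel, mem_reps, id_eq, and_true]
    constructor
    · rintro ⟨-, hx, hy, h⟩
      rw [part_id hx, part_id hy] at h
      exact ⟨h (mem_singleton_self x) (mem_singleton_self y), hx, hy⟩
    · rintro ⟨hxy, hx, hy⟩
      refine ⟨hxy.ne, hx, hy, ?_⟩
      rw [part_id hx, part_id hy]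
      simpa [SimpleGraph.IsCompleteBetween] using hxy
  · simp only [quotient, SimpleGraph.toTrigraphOn, PartRel, mem_reps, id_eq, and_true,
      iff_false]
    rintro ⟨-, hx, hy, h⟩
    rw [part_id hx, part_id hy] at h
    exact not_isMixed_singleton x y h

theorem partRel_merge_of_ne {Φ : Finset α → Finset α → Prop} (hp : p ∈ reps s r) (hpq : p ≠ q)
    (hx : x ≠ p) (hy : y ≠ p) :
    PartRel s (merge r p q) Φ x y ↔ PartRel s r Φ x y ∧ x ≠ q ∧ y ≠ q := by
  by_cases hxq : x = q
  · simp [PartRel, hxq, reps_merge hp hpq]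
  by_cases hyq : y = q
  · simp [PartRel, hyq, reps_merge hp hpq]
  simp only [PartRel, reps_merge hp hpq, mem_erase, part_merge_of_ne hx hxq,
    part_merge_of_ne hy hyq]
  tauto

theorem partRel_merge_self {Φ : Finset α → Finset α → Prop} (hp : p ∈ reps s r) (hpq : p ≠ q)
    (hxp : x ≠ p) (hxq : x ≠ q) :
    PartRel s (merge r p q) Φ p x ↔ x ∈ reps s r ∧ Φ (part s r p ∪ part s r q) (part s r x) := by
  simp only [PartRel, reps_merge hp hpq, mem_erase, part_merge_self, part_merge_of_ne hxp hxq]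
  tauto

theorem isContractionAt_quotient_merge (hp : p ∈ reps s r) (hq : q ∈ reps s r) (hpq : p ≠ q) :
    (quotient Γ s r).IsContractionAt (quotient Γ s (merge r p q)) p q := by
  simp only [Trigraph.IsContractionAt, quotient_black, quotient_red]
  refine ⟨hp, hq, hpq, reps_merge hp hpq, fun x y hx hy => partRel_merge_of_ne hp hpq hx hy,
    fun x y hx hy => partRel_merge_of_ne hp hpq hx hy, fun x hxp hxq => ?_,
    fun x hxp hxq => ?_⟩ <;> rw [partRel_merge_self hp hpq hxp hxq]
  · rw [coe_union, SimpleGraph.isCompleteBetween_union_left]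
    simp only [PartRel, hp, hq, ne_eq, hxp.symm, hxq.symm, not_false_eq_true, true_and]
    tauto
  · by_cases hx : x ∈ reps s r
    · -- complete pairs of (nonempty) parts have edges, so black or red means having an edge
      have hne : ∀ {z}, z ∈ reps s r → Γ.IsCompleteBetween (part s r z) (part s r x) →
          HasEdgeBetween Γ (part s r z) (part s r x) :=
        fun hz h => .of_isCompleteBetween h ⟨_, self_mem_part hz⟩ ⟨x, self_mem_part hx⟩
      have hpx := hne hp
      have hqx := hne hq
      simp only [PartRel, IsMixed, hp, hq, hx, ne_eq, hxp.symm, hxq.symm, not_false_eq_true,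
        true_and, coe_union, SimpleGraph.isCompleteBetween_union_left, hasEdgeBetween_union_left]
      tauto
    · simp [PartRel, hx]

theorem hasSeq_quotient_of_invariant (P : (α → α) → Prop)
    (hdeg : ∀ r, P r → (quotient Γ s r).RedDegLE d)
    (hstep : ∀ r, P r → 1 < #(reps s r) →
      ∃ p ∈ reps s r, ∃ q ∈ reps s r, p ≠ q ∧ P (merge r p q))
    (hr : P r) : (quotient Γ s r).HasSeq d := by
  induction hn : #(reps s r) using Nat.strong_induction_on generalizing r with
  | _ n ih =>
    rcases le_or_gt n 1 with h | h
    · exact Trigraph.hasSeq_of_card_verts_le_one (hn ▸ h) d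
    · obtain ⟨p, hp, q, hq, hpq, hP⟩ := hstep r hr (hn ▸ h)
      have hc := isContractionAt_quotient_merge (Γ := Γ) hp hq hpq
      have hcard : #(reps s (merge r p q)) < n := by
        have := hc.card_verts
        simp only [quotient] at this
        omega
      exact (ih _ hcard hP rfl).of_isContraction ⟨p, q, hc⟩ (hdeg r hr)

theorem hasSeq_toTrigraphOn_card (Γ : SimpleGraph α) (s : Finset α) :
    (Γ.toTrigraphOn s).HasSeq #s := by
  rw [← quotient_id]
  refine hasSeq_quotient_of_invariant (IsRepMap s) (fun r _ x => ?_) (fun r hr hn => ?_)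
    (isRepMap_id s)
  · exact Trigraph.redDeg_le_of_red_subset (fun y h => (mem_reps.1 (mem_reps_of_red h).2).1) le_rfl
  · obtain ⟨p, hp, q, hq, hpq⟩ := one_lt_card.1 hn
    exact ⟨p, hp, q, hq, hpq, hr.merge hp hpq⟩

theorem hasSeq_toTrigraphOn_of_tww_le (h : (Γ.toTrigraphOn s).tww ≤ d) :
    (Γ.toTrigraphOn s).HasSeq d :=
  Trigraph.hasSeq_of_tww_le h ⟨_, hasSeq_toTrigraphOn_card Γ s⟩

theorem redDegLE_quotient_of_fibres {Δ : SimpleGraph α} {u : Finset α} {rc : α → α} {M : ℕ}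
    (hfib : ∀ p ∈ reps s r, #(subparts s r rc p) ≤ M)
    (hred : ∀ p q, (quotient Γ s r).red p q → rc p ≠ rc q →
      (quotient Δ u rc).red (rc p) (rc q))
    (hc : (quotient Δ u rc).RedDegLE d) : (quotient Γ s r).RedDegLE (M * (d + 1)) := by
  classical
  intro x
  rw [← Trigraph.card_filter_red_eq_redDeg]
  set N := {y ∈ (quotient Γ s r).verts | (quotient Γ s r).red x y}
  have hN : ∀ y ∈ N, (quotient Γ s r).red x y := fun y hy => (mem_filter.1 hy).2
  calc #N ≤ M * #(N.image rc) := card_le_mul_card_image N M fun z hz => by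
        obtain ⟨y, hy, rfl⟩ := mem_image.1 hz
        refine (card_le_card fun w hw => ?_).trans (hfib y (mem_reps_of_red (hN y hy)).2)
        rw [mem_filter] at hw
        exact mem_filter.2 ⟨(mem_reps_of_red (hN w hw.1)).2, hw.2⟩
    _ ≤ M * (d + 1) := by
        gcongr
        calc #(N.image rc)
            ≤ #(insert (rc x) {z ∈ (quotient Δ u rc).verts | (quotient Δ u rc).red (rc x) z}) :=
              card_le_card fun z hz => by
                obtain ⟨y, hy, rfl⟩ := mem_image.1 hz
                rcases eq_or_ne (rc x) (rc y) with h | h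
                · exact h ▸ mem_insert_self _ _
                · have hxy := hred x y (hN y hy) h
                  exact mem_insert_of_mem (mem_filter.2 ⟨(mem_reps_of_red hxy).2, hxy⟩)
          _ ≤ d + 1 := (card_insert_le _ _).trans (by
              rw [Trigraph.card_filter_red_eq_redDeg]; exact Nat.succ_le_succ (hc _))

theorem redDegLE_quotient_of_between {rf rc : α → α} {M : ℕ} (hf : IsRepMap s rf)
    (hc : IsRepMap s rc) (h : Refines s rf r) (h' : Refines s r rc)
    (hblow : ∀ p ∈ s, #(subparts s rf rc p) ≤ M) (hd : (quotient Γ s rc).RedDegLE d) :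
    (quotient Γ s r).RedDegLE (M * (d + 1)) := by
  refine redDegLE_quotient_of_fibres (fun p hp => (card_subparts_le_of_refines hf h h').trans
    (hblow p (mem_reps.1 hp).1)) (fun p q hpq hne => ?_) hd
  obtain ⟨-, hp, hq, hmix⟩ := hpq
  exact ⟨hne, hc.apply_mem_reps (mem_reps.1 hp).1, hc.apply_mem_reps (mem_reps.1 hq).1,
    hmix.mono (part_subset_part_of_refines h' hp) (part_subset_part_of_refines h' hq)⟩

end Quotient

section SoundQuotient

variable {α : Type*} [DecidableEq α] {s : Finset α} {r : α → α} {p q u v : α}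
  {Γ : SimpleGraph α} {T T' : Trigraph α} {d : ℕ}

/-- The invariant of the trigraphs in a contraction sequence of `Γ[s]`, with `r` sending each
vertex of `s` to the vertex it has been contracted into: they may only err on red edges. -/
structure IsSoundQuotient (T : Trigraph α) (Γ : SimpleGraph α) (s : Finset α) (r : α → α) :
    Prop where
  verts_eq : T.verts = reps s r
  complete_of_black : ∀ p q, T.black p q → Γ.IsCompleteBetween (part s r p) (part s r q)
  not_hasEdgeBetween : ∀ p ∈ reps s r, ∀ q ∈ reps s r, p ≠ q → ¬ T.black p q → ¬ T.red p q →
    ¬ HasEdgeBetween Γ (part s r p) (part s r q)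

theorem isSoundQuotient_toTrigraphOn (Γ : SimpleGraph α) (s : Finset α) :
    IsSoundQuotient (Γ.toTrigraphOn s) Γ s id where
  verts_eq := (reps_id s).symm
  complete_of_black p q h := by
    rw [part_id h.2.1, part_id h.2.2]
    simpa [SimpleGraph.IsCompleteBetween] using h.1
  not_hasEdgeBetween p hp q hq _ hb _ := by
    rw [reps_id] at hp hq
    rw [part_id hp, part_id hq]
    rintro ⟨x, hx, y, hy, hxy⟩
    rw [mem_singleton] at hx hy
    subst hx hy
    exact hb ⟨hxy, hp, hq⟩

theorem IsSoundQuotient.red_of_red (h : IsSoundQuotient T Γ s r)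
    (hpq : (quotient Γ s r).red p q) : T.red p q := by
  obtain ⟨hne, hp, hq, hedge, hnc⟩ := hpq
  by_contra hr
  by_cases hb : T.black p q
  · exact hnc (h.complete_of_black p q hb)
  · exact h.not_hasEdgeBetween p hp q hq hne hb hr hedge

theorem IsSoundQuotient.redDegLE (h : IsSoundQuotient T Γ s r) (hT : T.RedDegLE d) :
    (quotient Γ s r).RedDegLE d := fun x =>
  (Set.ncard_le_ncard (fun _ => h.red_of_red)
    (T.verts.finite_toSet.subset fun y hy => (T.red_mem x y hy).2)).trans (hT x)

theorem IsSoundQuotient.complete_of_black_contract (h : IsSoundQuotient T Γ s r)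
    (hc : T.IsContractionAt T' u v) (hqu : q ≠ u) (hpq : T'.black p q) :
    Γ.IsCompleteBetween (part s (merge r u v) p) (part s (merge r u v) q) := by
  obtain ⟨-, -, -, hverts, hblack, -, hblack_u, -⟩ := hc
  have hne_v : ∀ {x}, x ∈ T'.verts → x ≠ v := fun hx => (mem_erase.1 (hverts ▸ hx)).1
  have hqv := hne_v (T'.black_mem p q hpq).2
  rw [part_merge_of_ne hqu hqv]
  rcases eq_or_ne p u with rfl | hpu
  · obtain ⟨hb_u, hb_v⟩ := (hblack_u q hqu hqv).1 hpq
    rw [part_merge_self, coe_union, SimpleGraph.isCompleteBetween_union_left]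
    exact ⟨h.complete_of_black _ _ hb_u, h.complete_of_black _ _ hb_v⟩
  · rw [part_merge_of_ne hpu (hne_v (T'.black_mem p q hpq).1)]
    exact h.complete_of_black p q ((hblack p q hpu hqu).1 hpq).1

theorem IsSoundQuotient.not_hasEdgeBetween_contract (h : IsSoundQuotient T Γ s r)
    (hc : T.IsContractionAt T' u v) (hp : p ∈ reps s (merge r u v))
    (hq : q ∈ reps s (merge r u v)) (hpq : p ≠ q) (hqu : q ≠ u) (hb : ¬ T'.black p q)
    (hr : ¬ T'.red p q) :
    ¬ HasEdgeBetween Γ (part s (merge r u v) p) (part s (merge r u v) q) := by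
  obtain ⟨hu, hv, huv, -, hblack, hred, hblack_u, hred_u⟩ := hc
  rw [h.verts_eq] at hu hv
  obtain ⟨hqr, hqv⟩ := mem_reps_of_mem_reps_merge hu huv hq
  rw [part_merge_of_ne hqu hqv]
  rcases eq_or_ne p u with rfl | hpu
  · rw [hblack_u q hqu hqv] at hb
    rw [hred_u q hqu hqv] at hr
    rw [part_merge_self, hasEdgeBetween_union_left, not_or]
    exact ⟨h.not_hasEdgeBetween _ hu q hqr hpq (by tauto) (by tauto),
      h.not_hasEdgeBetween _ hv q hqr (Ne.symm hqv) (by tauto) (by tauto)⟩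
  · obtain ⟨hpr, hpv⟩ := mem_reps_of_mem_reps_merge hu huv hp
    rw [part_merge_of_ne hpu hpv]
    exact h.not_hasEdgeBetween p hpr q hqr hpq
      (fun hb' => hb ((hblack p q hpu hqu).2 ⟨hb', hpv, hqv⟩))
      (fun hr' => hr ((hred p q hpu hqu).2 ⟨hr', hpv, hqv⟩))

theorem IsSoundQuotient.contract (h : IsSoundQuotient T Γ s r) (hc : T.IsContractionAt T' u v) :
    IsSoundQuotient T' Γ s (merge r u v) := by
  refine ⟨by rw [hc.2.2.2.1, h.verts_eq, reps_merge (h.verts_eq ▸ hc.1) hc.2.2.1],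
    fun p q hpq => ?_, fun p hp q hq hpq hb hr => ?_⟩
  · rcases eq_or_ne q u with rfl | hqu
    · exact (h.complete_of_black_contract hc (fun he => T'.black_irrefl _ (he ▸ hpq))
        (T'.black_symm _ _ hpq)).symm
    · exact h.complete_of_black_contract hc hqu hpq
  · rcases eq_or_ne q u with rfl | hqu
    · exact fun he => h.not_hasEdgeBetween_contract hc hq hp hpq.symm hpq
        (mt (T'.black_symm _ _) hb) (mt (T'.red_symm _ _) hr) he.symm
    · exact h.not_hasEdgeBetween_contract hc hp hq hpq hqu hb hr

end SoundQuotient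

section StrongProduct

variable {α β : Type*} [DecidableEq α] [DecidableEq β] {s : Finset α} {t : Finset β}
  {r : α → α} {g : β → β} {G : SimpleGraph α} {H : SimpleGraph β} [DecidableRel H.Adj] {a b D : ℕ}

/-- A part `P × {w}` is mixed only with parts `P' × {w'}` where `P'` is `P` or red to it and `w'`
is `w` or adjacent to it. -/
theorem redDegLE_quotient_prodMap_id (hG : (quotient G s r).RedDegLE a)
    (hD : ∀ w, #{u ∈ t | H.Adj w u} ≤ D) :
    (quotient (strongProd G H) (s ×ˢ t) (Prod.map r id)).RedDegLE ((a + 1) * (D + 1)) := by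
  classical
  intro p
  refine Trigraph.redDeg_le_of_red_subset
    (s := insert p.1 {z ∈ reps s r | (quotient G s r).red p.1 z} ×ˢ
      insert p.2 {u ∈ t | H.Adj p.2 u}) (fun q hpq => ?_) ?_
  · obtain ⟨hne, hp, hq, ⟨x, hx, y, hy, hxy⟩, hnc⟩ := hpq
    rw [reps_prodMap, reps_id, mem_product] at hp hq
    rw [part_prodMap, mem_product, part_id hp.2, mem_singleton] at hx
    rw [part_prodMap, mem_product, part_id hq.2, mem_singleton] at hy
    simp only [part_prodMap, part_id hp.2, part_id hq.2] at hnc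
    rw [strongProd_adj, hx.2, hy.2] at hxy
    refine mem_product.2 ⟨?_, ?_⟩
    · rcases eq_or_ne p.1 q.1 with h | h
      · exact h ▸ mem_insert_self _ _
      refine mem_insert_of_mem (mem_filter.2 ⟨hq.1, h, hp.1, hq.1, ⟨x.1, hx.1, y.1, hy.1, ?_⟩,
        fun hc => hnc fun x' hx' y' hy' => ?_⟩)
      · refine hxy.2.1.resolve_left fun h' => h ?_
        rw [← (mem_part.1 hx.1).2, ← (mem_part.1 hy.1).2, h']
      · rw [mem_coe, mem_product, mem_singleton] at hx' hy'
        have hadj := hc hx'.1 hy'.1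
        refine strongProd_adj.2 ⟨fun he => hadj.ne (congrArg Prod.fst he), .inr hadj, ?_⟩
        rw [hx'.2, hy'.2]
        exact hxy.2.2
    · rcases hxy.2.2 with h | h
      · exact h ▸ mem_insert_self _ _
      · exact mem_insert_of_mem (mem_filter.2 ⟨hq.2, h⟩)
  · rw [card_product]
    gcongr
    · refine (card_insert_le _ _).trans (Nat.succ_le_succ ?_)
      exact (Trigraph.card_filter_red_eq_redDeg _ _).trans_le (hG p.1)
    · exact (card_insert_le _ _).trans (Nat.succ_le_succ (hD p.2))

/-- A part `s × Q'` mixed with `s × Q` has `Q'` red to `Q`, or complete to it and then containing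
a neighbour of the representative of `Q`. -/
theorem redDegLE_quotient_prodMap_of_const (hr : ∀ x ∈ s, ∀ y ∈ s, r x = r y)
    (hH : (quotient H t g).RedDegLE b) (hD : ∀ w, #{u ∈ t | H.Adj w u} ≤ D) :
    (quotient (strongProd G H) (s ×ˢ t) (Prod.map r g)).RedDegLE (b + D) := by
  classical
  intro p
  refine Trigraph.redDeg_le_of_red_subset (s := ({z ∈ reps t g | (quotient H t g).red p.2 z} ∪
    {u ∈ t | H.Adj p.2 u}).image (Prod.mk p.1)) (fun q hpq => ?_) ?_
  · obtain ⟨hne, hp, hq, ⟨x, hx, y, hy, hxy⟩, hnc⟩ := hpq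
    rw [reps_prodMap, mem_product, mem_reps, mem_reps] at hp hq
    have h1 : p.1 = q.1 := by rw [← hp.1.2, ← hq.1.2, hr _ hp.1.1 _ hq.1.1]
    have h2 : p.2 ≠ q.2 := fun h => hne (Prod.ext h1 h)
    refine mem_image.2 ⟨q.2, ?_, Prod.ext h1 rfl⟩
    rw [part_prodMap, mem_product, mem_part, mem_part] at hx hy
    have hxy2 : H.Adj x.2 y.2 := (strongProd_adj.1 hxy).2.2.resolve_left fun h =>
      h2 (by rw [← hx.2.2, ← hy.2.2, h])
    by_cases hc : H.IsCompleteBetween (part t g p.2) (part t g q.2)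
    · exact mem_union_right _ (mem_filter.2 ⟨hq.2.1, hc (self_mem_part (mem_reps.2 hp.2))
        (self_mem_part (mem_reps.2 hq.2))⟩)
    · exact mem_union_left _ (mem_filter.2 ⟨mem_reps.2 hq.2, h2, mem_reps.2 hp.2, mem_reps.2 hq.2,
        ⟨x.2, mem_part.2 hx.2, y.2, mem_part.2 hy.2, hxy2⟩, hc⟩)
  · refine card_image_le.trans ((card_union_le _ _).trans (add_le_add ?_ (hD p.2)))
    exact (Trigraph.card_filter_red_eq_redDeg _ _).trans_le (hH p.2)

end StrongProduct

/-! ### Chains of partitions -/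

structure PartitionChain {α : Type*} (s : Finset α) where
  len : ℕ
  rep : ℕ → α → α
  isRepMap : ∀ j ≤ len, IsRepMap s (rep j)
  rep_zero : rep 0 = id
  rep_len : ∀ x ∈ s, ∀ y ∈ s, rep len x = rep len y
  refines : ∀ j < len, Refines s (rep j) (rep (j + 1))

namespace PartitionChain

variable {α : Type*} [DecidableEq α] {s : Finset α} (C : PartitionChain s) {r : α → α}
  {Γ : SimpleGraph α} {d : ℕ}

def BlowupLE (M : ℕ) : Prop :=
  ∀ j < C.len, ∀ p ∈ s, #(subparts s (C.rep j) (C.rep (j + 1)) p) ≤ M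

def WidthLE (Γ : SimpleGraph α) (d : ℕ) : Prop :=
  ∀ j ≤ C.len, (quotient Γ s (C.rep j)).RedDegLE d

def Between (r : α → α) : Prop :=
  IsRepMap s r ∧ ∃ j < C.len, Refines s (C.rep j) r ∧ Refines s r (C.rep (j + 1))

theorem exists_merge_between (hr : IsRepMap s r) (hn : 1 < #(reps s r)) (j : ℕ) (hj : j < C.len)
    (h : Refines s (C.rep j) r) (h' : Refines s r (C.rep (j + 1))) :
    ∃ p ∈ reps s r, ∃ q ∈ reps s r, p ≠ q ∧ C.Between (merge r p q) := by
  by_cases hsame : Refines s (C.rep (j + 1)) r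
  · have hj' : j + 1 < C.len := by
      by_contra hj'
      obtain ⟨p, hp, q, hq, hpq⟩ := one_lt_card.1 hn
      rw [mem_reps] at hp hq
      have := hsame p hp.1 q hq.1
        (by rw [show j + 1 = C.len by omega]; exact C.rep_len p hp.1 q hq.1)
      exact hpq (hp.2.symm.trans (this.trans hq.2))
    exact exists_merge_between hr hn (j + 1) hj' hsame (h'.trans (C.refines _ hj'))
  · simp only [Refines, not_forall] at hsame
    obtain ⟨x, hx, y, hy, hxy, hne⟩ := hsame
    refine ⟨r x, hr.apply_mem_reps hx, r y, hr.apply_mem_reps hy, hne,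
      hr.merge (hr.apply_mem_reps hx) hne, j, hj, h.trans (refines_merge s r _ _),
      h'.merge_of_apply_eq hr ?_⟩
    rw [h'.apply_self hr hx, h'.apply_self hr hy, hxy]
termination_by C.len - j

theorem hasSeq {M : ℕ} (hM : C.BlowupLE M) (hd : C.WidthLE Γ d) :
    (Γ.toTrigraphOn s).HasSeq (M * (d + 1)) := by
  rcases Nat.eq_zero_or_pos C.len with h0 | hpos
  · refine Trigraph.hasSeq_of_card_verts_le_one (card_le_one.2 fun x hx y hy => ?_) _
    simpa [h0, C.rep_zero] using C.rep_len x hx y hy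
  rw [← quotient_id]
  refine hasSeq_quotient_of_invariant C.Between (fun r ⟨hr, j, hj, h, h'⟩ => ?_)
    (fun r ⟨hr, j, hj, h, h'⟩ hn => C.exists_merge_between hr hn j hj h h')
    ⟨isRepMap_id s, 0, hpos, ?_, ?_⟩
  · exact redDegLE_quotient_of_between (C.isRepMap j hj.le) (C.isRepMap (j + 1) hj) h h'
      (hM j hj) (hd (j + 1) hj)
  · rw [C.rep_zero]; exact Refines.refl s id
  · rw [← C.rep_zero]; exact C.refines 0 hpos

end PartitionChain

section Extraction

variable {α : Type*} [DecidableEq α] {s : Finset α} {Γ : SimpleGraph α} {d : ℕ}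

/-- The partition of `s` after contracting `v i` into `u i` for `i = n - 1, …, n - k`. -/
def mergeSeq (n : ℕ) (u v : ℕ → α) : ℕ → α → α
  | 0 => id
  | k + 1 => merge (mergeSeq n u v k) (u (n - 1 - k)) (v (n - 1 - k))

theorem isSoundQuotient_mergeSeq {f : ℕ → Trigraph α} {u v : ℕ → α}
    (hf : f #s = Γ.toTrigraphOn s)
    (huv : ∀ i, 1 ≤ i → i < #s → (f (i + 1)).IsContractionAt (f i) (u i) (v i)) {k : ℕ}
    (hk : k ≤ #s - 1) :
    IsRepMap s (mergeSeq #s u v k) ∧ IsSoundQuotient (f (#s - k)) Γ s (mergeSeq #s u v k) ∧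
      #(f (#s - k)).verts = #s - k := by
  induction k with
  | zero =>
    rw [Nat.sub_zero, hf]
    exact ⟨isRepMap_id s, isSoundQuotient_toTrigraphOn Γ s, rfl⟩
  | succ k ih =>
    obtain ⟨hr, hT, hcard⟩ := ih (by omega)
    have hc := huv (#s - 1 - k) (by omega) (by omega)
    rw [show #s - 1 - k + 1 = #s - k by omega] at hc
    rw [show #s - (k + 1) = #s - 1 - k by omega, mergeSeq]
    refine ⟨hr.merge (hT.verts_eq ▸ hc.1) hc.2.2.1, hT.contract hc, ?_⟩
    have := hc.card_verts
    omega

theorem exists_partitionChain_of_hasSeq (h : (Γ.toTrigraphOn s).HasSeq d) :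
    ∃ C : PartitionChain s, C.BlowupLE 2 ∧ C.WidthLE Γ d := by
  rcases s.eq_empty_or_nonempty with rfl | ⟨a, ha⟩
  · exact ⟨⟨0, fun _ => id, fun _ _ => isRepMap_id _, rfl, by simp, by simp⟩,
      by simp [PartitionChain.BlowupLE],
      fun _ _ => Trigraph.redDegLE_of_card_verts_le_one (by simp [quotient, reps]) d⟩
  have : Nonempty α := ⟨a⟩
  obtain ⟨f, hf, hfc, hfd⟩ := h
  rw [show (Γ.toTrigraphOn s).verts = s from rfl] at hf hfc hfd
  have hn : 0 < #s := card_pos.2 ⟨a, ha⟩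
  choose! u v huv using hfc
  have hsound := fun k (hk : k ≤ #s - 1) => isSoundQuotient_mergeSeq hf huv hk
  refine ⟨⟨#s - 1, mergeSeq #s u v, fun j hj => (hsound j hj).1, rfl, fun x hx y hy => ?_,
    fun j _ => refines_merge s _ _ _⟩, fun j _ p _ => card_subparts_merge_le_two,
    fun j (hj : j ≤ #s - 1) => (hsound j hj).2.1.redDegLE (hfd _ (by omega) (by omega))⟩
  obtain ⟨hr, hT, hcard⟩ := hsound (#s - 1) le_rfl
  rw [hT.verts_eq, show #s - (#s - 1) = 1 by omega] at hcard
  exact card_le_one.1 hcard.le _ (hr.apply_mem_reps hx) _ (hr.apply_mem_reps hy)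

end Extraction

namespace PartitionChain

variable {α β : Type*} {s : Finset α} {t : Finset β} (CG : PartitionChain s)
  (CH : PartitionChain t)

/-- The partitions of `CG` times the discrete partition of `t`, then the last (trivial) one of
`CG` times those of `CH`; the truncated `j - CG.len` is `0` during the first phase. -/
def prod : PartitionChain (s ×ˢ t) where
  len := CG.len + CH.len
  rep j := Prod.map (CG.rep (min j CG.len)) (CH.rep (j - CG.len))
  isRepMap j hj := (CG.isRepMap _ (min_le_right _ _)).prodMap (CH.isRepMap _ (by omega))
  rep_zero := by simp [CG.rep_zero, CH.rep_zero]
  rep_len x hx y hy := by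
    rw [mem_product] at hx hy
    rw [min_eq_right (by omega), Nat.add_sub_cancel_left]
    exact Prod.ext (CG.rep_len _ hx.1 _ hy.1) (CH.rep_len _ hx.2 _ hy.2)
  refines j hj := by
    rcases lt_or_ge j CG.len with h | h
    · rw [min_eq_left h.le, min_eq_left h, Nat.sub_eq_zero_of_le h.le,
        Nat.sub_eq_zero_of_le h]
      exact (CG.refines j h).prodMap (Refines.refl _ _)
    · rw [min_eq_right h, min_eq_right (by omega), show j + 1 - CG.len = j - CG.len + 1 by omega]
      exact (Refines.refl _ _).prodMap (CH.refines _ (by omega))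

variable {CG CH} [DecidableEq α] [DecidableEq β]

theorem blowupLE_prod {M : ℕ} (hG : CG.BlowupLE M) (hH : CH.BlowupLE M) :
    (CG.prod CH).BlowupLE M := by
  intro j hj p hp
  simp only [prod, subparts_prodMap, card_product]
  rw [mem_product] at hp
  rcases lt_or_ge j CG.len with h | h
  · rw [min_eq_left h.le, min_eq_left h, Nat.sub_eq_zero_of_le h.le, Nat.sub_eq_zero_of_le h]
    exact mul_le_of_le_of_le_one (hG j h _ hp.1) (card_subparts_self_le_one _)
  · rw [min_eq_right h, min_eq_right (by omega), show j + 1 - CG.len = j - CG.len + 1 by omega,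
      mul_comm]
    exact mul_le_of_le_of_le_one (hH _ (by simp only [prod] at hj; omega) _ hp.2)
      (card_subparts_self_le_one _)

theorem widthLE_prod {G : SimpleGraph α} {H : SimpleGraph β} [DecidableRel H.Adj] {a b D : ℕ}
    (hG : CG.WidthLE G a) (hH : CH.WidthLE H b) (hD : ∀ w, #{u ∈ t | H.Adj w u} ≤ D) :
    (CG.prod CH).WidthLE (strongProd G H) (max ((a + 1) * (D + 1)) (b + D)) := by
  intro j hj
  simp only [prod] at hj ⊢
  rcases le_or_gt j CG.len with h | h
  · rw [min_eq_left h, Nat.sub_eq_zero_of_le h, CH.rep_zero]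
    exact (redDegLE_quotient_prodMap_id (hG j h) hD).mono (le_max_left _ _)
  · rw [min_eq_right h.le]
    exact (redDegLE_quotient_prodMap_of_const CG.rep_len (hH _ (by omega)) hD).mono
      (le_max_right _ _)

end PartitionChain

/-! ### Refining a chain for a subgraph of a `K_{t,t}`-free graph -/

namespace PartitionChain

variable {α : Type*} [DecidableEq α] {u s : Finset α} (C : PartitionChain u) {x y z p q : α}
  {j : ℕ}

def partOf (j : ℕ) (x : α) : Finset α := part u (C.rep j) (C.rep j x)

variable {C}

theorem mem_partOf : z ∈ C.partOf j x ↔ z ∈ u ∧ C.rep j z = C.rep j x := mem_part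

theorem partOf_congr (h : C.rep j x = C.rep j y) : C.partOf j x = C.partOf j y := by
  rw [partOf, partOf, h]

theorem mem_partOf_self (hx : x ∈ u) : x ∈ C.partOf j x := mem_partOf.2 ⟨hx, rfl⟩

theorem partOf_subset_succ (hj : j < C.len) (hx : x ∈ u) : C.partOf j x ⊆ C.partOf (j + 1) x :=
  fun _ hz => mem_partOf.2 ⟨(mem_partOf.1 hz).1,
    C.refines j hj _ (mem_partOf.1 hz).1 _ hx (mem_partOf.1 hz).2⟩

variable (C) (K Γ : SimpleGraph α) (t : ℕ)

open scoped Classical in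
noncomputable def smallComplete (j : ℕ) (x : α) : Finset α :=
  {z ∈ u | #(C.partOf j z) < t ∧ C.rep j z ≠ C.rep j x ∧
    K.IsCompleteBetween (C.partOf j z) (C.partOf j x)}

open scoped Classical in
noncomputable def profile (j : ℕ) (x : α) : Finset α :=
  {z ∈ C.smallComplete K t j x | Γ.Adj x z}

noncomputable def refinedLabel (j : ℕ) (x : α) : Option (α × Finset α) :=
  if j ≤ C.len then
    some (C.rep j x, if t ≤ #(C.partOf j x) then C.profile K Γ t j x else {x})
  else none

variable {C K Γ t}

theorem mem_smallComplete : z ∈ C.smallComplete K t j x ↔ z ∈ u ∧ #(C.partOf j z) < t ∧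
    C.rep j z ≠ C.rep j x ∧ K.IsCompleteBetween (C.partOf j z) (C.partOf j x) := by
  simp only [smallComplete, mem_filter]

theorem mem_profile : z ∈ C.profile K Γ t j x ↔ z ∈ C.smallComplete K t j x ∧ Γ.Adj x z := by
  simp only [profile, mem_filter]

theorem smallComplete_congr (h : C.rep j x = C.rep j y) :
    C.smallComplete K t j x = C.smallComplete K t j y := by
  ext z
  simp only [mem_smallComplete, h, partOf_congr h]

theorem smallComplete_succ_subset (hj : j < C.len) (hx : x ∈ u) :
    C.smallComplete K t (j + 1) x ⊆ C.smallComplete K t j x := fun z hz => by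
  obtain ⟨hz, hsmall, hne, hc⟩ := mem_smallComplete.1 hz
  exact mem_smallComplete.2 ⟨hz, (card_le_card (partOf_subset_succ hj hz)).trans_lt hsmall,
    fun h => hne (C.refines j hj z hz x hx h),
    hc.mono (coe_subset.2 (partOf_subset_succ hj hz)) (coe_subset.2 (partOf_subset_succ hj hx))⟩

theorem profile_succ (hj : j < C.len) (hx : x ∈ u) :
    C.profile K Γ t (j + 1) x = {z ∈ C.smallComplete K t (j + 1) x | z ∈ C.profile K Γ t j x} := by
  ext z
  simp only [mem_filter, mem_profile]
  have : z ∈ C.smallComplete K t (j + 1) x → z ∈ C.smallComplete K t j x :=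
    fun hz => smallComplete_succ_subset hj hx hz
  tauto

theorem refinedLabel_eq_iff (hj : j ≤ C.len) :
    C.refinedLabel K Γ t j x = C.refinedLabel K Γ t j y ↔ C.rep j x = C.rep j y ∧
      if t ≤ #(C.partOf j x) then C.profile K Γ t j x = C.profile K Γ t j y else x = y := by
  simp only [refinedLabel, if_pos hj, Option.some.injEq, Prod.mk.injEq]
  refine and_congr_right fun h => ?_
  rw [partOf_congr h]
  split_ifs <;> simp

theorem refinedLabel_succ_eq (hx : x ∈ u) (hy : y ∈ u)
    (h : C.refinedLabel K Γ t j x = C.refinedLabel K Γ t j y) :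
    C.refinedLabel K Γ t (j + 1) x = C.refinedLabel K Γ t (j + 1) y := by
  rcases lt_or_ge j C.len with hj | hj
  · obtain ⟨hrep, hprof⟩ := (refinedLabel_eq_iff hj.le).1 h
    have hrep' := C.refines j hj x hx y hy hrep
    refine (refinedLabel_eq_iff hj).2 ⟨hrep', ?_⟩
    by_cases hl : t ≤ #(C.partOf j x)
    · have hl' : t ≤ #(C.partOf (j + 1) x) := hl.trans (card_le_card (partOf_subset_succ hj hx))
      rw [if_pos hl] at hprof
      rw [if_pos hl', profile_succ hj hx, profile_succ hj hy, hprof, smallComplete_congr hrep']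
    · rw [if_neg hl] at hprof
      subst hprof
      split_ifs <;> rfl
  · simp [refinedLabel, show ¬ j + 1 ≤ C.len by omega]

variable (C K Γ t) in
noncomputable def refinedChain {s : Finset α} (hs : s ⊆ u) : PartitionChain s where
  len := C.len + 1
  rep j := repOf s (C.refinedLabel K Γ t j)
  isRepMap j _ := isRepMap_repOf s _
  rep_zero := repOf_eq_id fun x _ y _ h => by
    simpa [refinedLabel, C.rep_zero] using congrArg (Option.map Prod.fst) h
  rep_len x hx y hy := (repOf_eq_repOf_iff hx hy).2 (by simp [refinedLabel])
  refines _ _ := refines_repOf fun _ hx _ hy => refinedLabel_succ_eq (hs hx) (hs hy)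

theorem card_smallComplete_lt (hfree : KttFree K t) (hl : t ≤ #(C.partOf j x)) :
    #(C.smallComplete K t j x) < t := by
  by_contra! hT
  refine hfree.not_isCompleteBetween (disjoint_left.2 fun z hz hz' => ?_) hT hl fun z hz w hw => ?_
  · exact (mem_smallComplete.1 hz).2.2.1 (mem_partOf.1 hz').2
  · obtain ⟨hz, -, -, hc⟩ := mem_smallComplete.1 hz
    exact hc (mem_partOf_self hz) hw

theorem not_isCompleteBetween_of_le_card (hfree : KttFree K t) (hne : C.rep j x ≠ C.rep j y)
    (hx : t ≤ #(C.partOf j x)) (hy : t ≤ #(C.partOf j y)) :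
    ¬ K.IsCompleteBetween (C.partOf j x) (C.partOf j y) :=
  hfree.not_isCompleteBetween (disjoint_left.2 fun _ hz hz' =>
    hne ((mem_partOf.1 hz).2.symm.trans (mem_partOf.1 hz').2)) hx hy

theorem rep_eq_of_repOf_eq (hj : j ≤ C.len) (hx : x ∈ s) (hy : y ∈ s)
    (h : repOf s (C.refinedLabel K Γ t j) x = repOf s (C.refinedLabel K Γ t j) y) :
    C.rep j x = C.rep j y :=
  ((refinedLabel_eq_iff hj).1 ((repOf_eq_repOf_iff hx hy).1 h)).1

theorem part_repOf_refinedLabel_of_small (hj : j ≤ C.len) (hx : x ∈ s)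
    (hsmall : #(C.partOf j x) < t) :
    part s (repOf s (C.refinedLabel K Γ t j)) (repOf s (C.refinedLabel K Γ t j) x) = {x} := by
  ext y
  rw [mem_part_repOf hx, refinedLabel_eq_iff hj, mem_singleton]
  refine ⟨fun ⟨_, hrep, h⟩ => ?_, fun h => ⟨h ▸ hx, h ▸ rfl, by simp [h]⟩⟩
  rwa [partOf_congr hrep, if_neg hsmall.not_ge] at h

theorem adj_iff_of_mem_part (hj : j ≤ C.len) (hx : x ∈ s) (hl : t ≤ #(C.partOf j x))
    (hz : z ∈ C.smallComplete K t j x)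
    (hy : y ∈ part s (repOf s (C.refinedLabel K Γ t j)) (repOf s (C.refinedLabel K Γ t j) x)) :
    Γ.Adj y z ↔ Γ.Adj x z := by
  obtain ⟨hrep, hprof⟩ := (refinedLabel_eq_iff hj).1 ((mem_part_repOf hx).1 hy).2
  rw [partOf_congr hrep, if_pos hl] at hprof
  have hz' : z ∈ C.smallComplete K t j y := by rwa [smallComplete_congr hrep]
  calc Γ.Adj y z ↔ z ∈ C.profile K Γ t j y := by simp only [mem_profile, hz', true_and]
    _ ↔ z ∈ C.profile K Γ t j x := by rw [hprof]
    _ ↔ Γ.Adj x z := by simp only [mem_profile, hz, true_and]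

theorem not_isMixed_of_small (hs : s ⊆ u) (hj : j ≤ C.len) (hp : p ∈ s) (hq : q ∈ s)
    (hsmall : #(C.partOf j p) < t) (hne : C.rep j p ≠ C.rep j q)
    (hc : K.IsCompleteBetween (C.partOf j p) (C.partOf j q)) :
    ¬ IsMixed Γ (part s (repOf s (C.refinedLabel K Γ t j)) (repOf s (C.refinedLabel K Γ t j) p))
      (part s (repOf s (C.refinedLabel K Γ t j)) (repOf s (C.refinedLabel K Γ t j) q)) := by
  rw [part_repOf_refinedLabel_of_small hj hp hsmall]
  refine not_isMixed_singleton_left fun x hx y hy hpx => ?_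
  by_cases hl : t ≤ #(C.partOf j q)
  · have hpT : p ∈ C.smallComplete K t j q := mem_smallComplete.2 ⟨hs hp, hsmall, hne, hc⟩
    rw [Γ.adj_comm] at hpx ⊢
    exact (adj_iff_of_mem_part hj hq hl hpT hy).2 ((adj_iff_of_mem_part hj hq hl hpT hx).1 hpx)
  · rw [part_repOf_refinedLabel_of_small hj hq (not_le.1 hl), mem_singleton] at hx hy
    exact hy ▸ hx ▸ hpx

theorem not_isMixed_of_isCompleteBetween (hfree : KttFree K t) (hs : s ⊆ u) (hj : j ≤ C.len)
    (hp : p ∈ s) (hq : q ∈ s) (hne : C.rep j p ≠ C.rep j q)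
    (hc : K.IsCompleteBetween (C.partOf j p) (C.partOf j q)) :
    ¬ IsMixed Γ (part s (repOf s (C.refinedLabel K Γ t j)) (repOf s (C.refinedLabel K Γ t j) p))
      (part s (repOf s (C.refinedLabel K Γ t j)) (repOf s (C.refinedLabel K Γ t j) q)) := by
  by_cases hsp : #(C.partOf j p) < t
  · exact not_isMixed_of_small hs hj hp hq hsp hne hc
  by_cases hsq : #(C.partOf j q) < t
  · exact fun h => not_isMixed_of_small hs hj hq hp hsq hne.symm hc.symm h.symm
  exact absurd hc (not_isCompleteBetween_of_le_card hfree hne (not_lt.1 hsp) (not_lt.1 hsq))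

theorem card_subparts_refinedLabel_le (hfree : KttFree K t) (hs : s ⊆ u) (hj : j ≤ C.len) :
    #(subparts s (repOf s (C.refinedLabel K Γ t j)) (C.rep j) p) ≤ 2 ^ t := by
  have hF : ∀ w ∈ subparts s (repOf s (C.refinedLabel K Γ t j)) (C.rep j) p,
      w ∈ s ∧ repOf s (C.refinedLabel K Γ t j) w = w ∧ C.rep j w = C.rep j p := fun w hw => by
    simpa only [mem_subparts, mem_reps, and_assoc] using hw
  by_cases hl : t ≤ #(C.partOf j p)
  · calc _ ≤ #(C.smallComplete K t j p).powerset := card_le_card_of_injOn (C.profile K Γ t j)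
          (fun w hw => by
            obtain ⟨-, -, hrep⟩ := hF w hw
            rw [mem_coe, mem_powerset, ← smallComplete_congr hrep]
            exact fun z hz => (mem_profile.1 hz).1)
          (fun w hw w' hw' h => by
            obtain ⟨hws, hwr, hrep⟩ := hF w hw
            obtain ⟨hws', hwr', hrep'⟩ := hF w' hw'
            rw [← hwr, ← hwr', repOf_eq_repOf_iff hws hws', refinedLabel_eq_iff hj,
              partOf_congr hrep, if_pos hl]
            exact ⟨hrep.trans hrep'.symm, h⟩)
      _ = 2 ^ #(C.smallComplete K t j p) := card_powerset _
      _ ≤ 2 ^ t := Nat.pow_le_pow_right two_pos (card_smallComplete_lt hfree hl).le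
  · calc _ ≤ #(C.partOf j p) := card_le_card fun w hw =>
          mem_partOf.2 ⟨hs (hF w hw).1, (hF w hw).2.2⟩
      _ ≤ 2 ^ t := (not_le.1 hl).le.trans Nat.lt_two_pow_self.le

theorem widthLE_refinedChain (hfree : KttFree K t) (hΓ : Γ ≤ K) (hs : s ⊆ u) {c : ℕ}
    (hC : C.WidthLE K c) : (C.refinedChain K Γ t hs).WidthLE Γ (2 ^ t * (c + 1)) := by
  intro j hj
  change j ≤ C.len + 1 at hj
  change (quotient Γ s (repOf s (C.refinedLabel K Γ t j))).RedDegLE _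
  rcases le_or_gt j C.len with hj | hj
  · refine redDegLE_quotient_of_fibres (fun p _ => card_subparts_refinedLabel_le hfree hs hj)
      (fun p q hpq hne => ?_) (hC j hj)
    obtain ⟨-, hp, hq, hmix⟩ := hpq
    rw [mem_reps] at hp hq
    have hsub : ∀ {x}, x ∈ s → repOf s (C.refinedLabel K Γ t j) x = x →
        part s (repOf s (C.refinedLabel K Γ t j)) x ⊆ C.partOf j x := fun hx hrx w hw => by
      rw [mem_part] at hw
      exact mem_partOf.2 ⟨hs hw.1, rep_eq_of_repOf_eq hj hw.1 hx (hw.2.trans hrx.symm)⟩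
    refine ⟨hne, (C.isRepMap j hj).apply_mem_reps (hs hp.1),
      (C.isRepMap j hj).apply_mem_reps (hs hq.1),
      (hmix.1.of_le hΓ).mono (hsub hp.1 hp.2) (hsub hq.1 hq.2), fun hc => ?_⟩
    exact not_isMixed_of_isCompleteBetween (Γ := Γ) hfree hs hj hp.1 hq.1 hne hc
      (by rwa [hp.2, hq.2])
  · refine Trigraph.redDegLE_of_card_verts_le_one (card_le_one.2 fun x hx y hy => ?_) _
    obtain ⟨hx, hrx⟩ := mem_reps.1 hx
    obtain ⟨hy, hry⟩ := mem_reps.1 hy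
    rw [← hrx, ← hry, repOf_eq_repOf_iff hx hy]
    simp [refinedLabel, show ¬ j ≤ C.len by omega]

theorem card_subparts_refinedLabel_succ_le (hfree : KttFree K t) (hs : s ⊆ u) {M : ℕ}
    (hj : j < C.len) (hp : p ∈ s) (hC : #(subparts u (C.rep j) (C.rep (j + 1)) p) ≤ M) :
    #(subparts s (repOf s (C.refinedLabel K Γ t j)) (repOf s (C.refinedLabel K Γ t (j + 1))) p)
      ≤ 2 ^ t * M := by
  set F := subparts s (repOf s (C.refinedLabel K Γ t j)) (repOf s (C.refinedLabel K Γ t (j + 1))) p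
  calc #F ≤ 2 ^ t * #(F.image (C.rep j)) := card_le_mul_card_image _ _ fun b hb => by
        obtain ⟨w₀, -, rfl⟩ := mem_image.1 hb
        refine (card_le_card fun w hw => ?_).trans
          (card_subparts_refinedLabel_le (Γ := Γ) hfree hs hj.le (p := w₀))
        obtain ⟨hw, hww₀⟩ := mem_filter.1 hw
        exact mem_subparts.2 ⟨(mem_subparts.1 hw).1, hww₀⟩
    _ ≤ 2 ^ t * M := Nat.mul_le_mul_left _ ((card_le_card fun b hb => by
        obtain ⟨w, hw, rfl⟩ := mem_image.1 hb
        obtain ⟨hw, hwp⟩ := mem_subparts.1 hw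
        have hws := (mem_reps.1 hw).1
        exact mem_subparts.2 ⟨(C.isRepMap j hj.le).apply_mem_reps (hs hws),
          ((C.refines j hj).apply_self (C.isRepMap j hj.le) (hs hws)).trans
            (rep_eq_of_repOf_eq hj hws hp hwp)⟩).trans hC)

theorem blowupLE_refinedChain (hfree : KttFree K t) (hs : s ⊆ u) {M : ℕ} (hM : 1 ≤ M)
    (hC : C.BlowupLE M) : (C.refinedChain K Γ t hs).BlowupLE (M * 2 ^ t) := by
  intro j hj p hp
  change j < C.len + 1 at hj
  change #(subparts s (repOf s (C.refinedLabel K Γ t j))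
    (repOf s (C.refinedLabel K Γ t (j + 1))) p) ≤ _
  rcases lt_or_eq_of_le (Nat.lt_succ_iff.1 hj) with hj | rfl
  · rw [mul_comm]
    exact card_subparts_refinedLabel_succ_le hfree hs hj hp (hC j hj p (hs hp))
  · calc _ ≤ #(subparts s (repOf s (C.refinedLabel K Γ t C.len)) (C.rep C.len) p) :=
          card_le_card fun w hw => mem_subparts.2 ⟨(mem_subparts.1 hw).1,
            C.rep_len _ (hs (mem_reps.1 (mem_subparts.1 hw).1).1) _ (hs hp)⟩
      _ ≤ 2 ^ t := card_subparts_refinedLabel_le hfree hs le_rfl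
      _ ≤ M * 2 ^ t := Nat.le_mul_of_pos_left _ hM

end PartitionChain

end TwinWidth

open TwinWidth PartitionChain in
/-- there is a function `f` such that whenever `tww(G) ≤ a`, `tww(H) ≤ b`,
`Δ(H) ≤ D` and `G ⊠ H` is `K_{t,t}`-free, every subgraph of `G ⊠ H` (obtained by deleting
vertices and/or edges) has twin-width at most `f a b D t`. -/
theorem twin_width_subgraphs_of_strong_product :
    ∃ f : ℕ → ℕ → ℕ → ℕ → ℕ,
      ∀ (a b D t : ℕ) (V W : Type) [Fintype V] [Fintype W] [DecidableEq V] [DecidableEq W]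
        (G : SimpleGraph V) (H : SimpleGraph W),
        Trigraph.tww G.toTrigraph ≤ a → Trigraph.tww H.toTrigraph ≤ b → maxDeg H ≤ D →
        KttFree (strongProd G H) t →
        ∀ (G' : SimpleGraph (V × W)) (s : Finset (V × W)), G' ≤ strongProd G H →
          Trigraph.tww (G'.toTrigraphOn s) ≤ f a b D t := by
  classical
  refine ⟨fun a b D t => 2 * 2 ^ t * (2 ^ t * (max ((a + 1) * (D + 1)) (b + D) + 1) + 1), ?_⟩
  intro a b D t V W _ _ _ _ G H hG hH hD hfree G' s hG'
  obtain ⟨CG, hCG, hCGw⟩ := exists_partitionChain_of_hasSeq (hasSeq_toTrigraphOn_of_tww_le hG)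
  obtain ⟨CH, hCH, hCHw⟩ := exists_partitionChain_of_hasSeq (hasSeq_toTrigraphOn_of_tww_le hH)
  have hK := widthLE_prod hCGw hCHw fun w => (card_filter_adj_le_maxDeg H univ w).trans hD
  have hs : s ⊆ univ ×ˢ univ := by simp
  exact Nat.sInf_le ((CG.prod CH).refinedChain _ G' t hs |>.hasSeq
    (blowupLE_refinedChain hfree hs one_le_two (blowupLE_prod hCG hCH))
    (widthLE_refinedChain hfree hG' hs hK))
end
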